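/- Let c > 0 and 0 < δ < c/100, and let ξ ∈ ℂ satisfy Re(ξ) ≥ c − δ and 0 ≤ Im(ξ) ≤ δ. Then |ℓ_c(ξ)| ≤ c·e^{1.56√(δc)}/sinh(c). -/

import Mathlib

/-!
Write `w = ξ² - c²` as `u²`; then `ℓ_c(ξ) = (c / sinh c) · sin u / u`, and
`|sin u / u| ≤ e^{|Im u|}`. A square root `u` of `w` has `|Im u| ≤ K` as soon as
`(Im w)² ≤ 4K²(Re w + K²)`, i.e. `w` lies inside the parabola with focus `0` and vertex `-K²`.
For `ξ` in the given box and `K² = κδc` this is, at the worst corner `ξ = c - δ + iδ`, the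
inequality `δ² ((κ² - 2κ - 1) c² + 2cδ - δ²) ≥ 0`, which holds because `κ = 1.56² > 1 + √2`.
-/

open scoped BigOperators

/-- The entire function `w ↦ sin(√w)/√w = ∑ (-1)ⁿ wⁿ/(2n+1)!`. -/
noncomputable def sincSqrt (w : ℂ) : ℂ :=
  ∑' n : ℕ, (-1) ^ n * w ^ n / ((2 * n + 1).factorial : ℂ)

/-- The Logan function `ℓ_c(z) = (c/sinh c)·sin(√(z²-c²))/√(z²-c²)`
(entire extension). -/
noncomputable def loganEll (c : ℝ) (z : ℂ) : ℂ :=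
  (c / Real.sinh c) * sincSqrt (z ^ 2 - (c : ℂ) ^ 2)

open Real

lemma Real.sinh_le_mul_exp (t : ℝ) : sinh t ≤ t * exp t := by
  have hprod : exp t * exp (-t) = 1 := by rw [← exp_add, add_neg_cancel, exp_zero]
  have hsq : 1 - 2 * t ≤ exp (-t) ^ 2 := by
    rw [sq, ← exp_add]
    linarith [add_one_le_exp (-t + -t)]
  rw [sinh_eq]
  nlinarith [exp_pos t, exp_pos (-t)]

lemma Real.abs_sinh_le_abs_mul_exp_abs (t : ℝ) : |sinh t| ≤ |t| * exp |t| := by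
  rw [abs_sinh]
  exact sinh_le_mul_exp |t|

lemma Complex.norm_sin_le_exp_abs_im_mul_norm (u : ℂ) :
    ‖sin u‖ ≤ Real.exp |u.im| * ‖u‖ := by
  set E := Real.exp |u.im|
  have hE : 1 ≤ E := one_le_exp (abs_nonneg _)
  have hsin : ‖sin u‖ ^ 2 = Real.sin u.re ^ 2 + Real.sinh u.im ^ 2 := by
    rw [sin_eq, Complex.sq_norm, ← ofReal_sin, ← ofReal_cosh, ← ofReal_cos, ← ofReal_sinh,
      ← ofReal_mul, ← ofReal_mul, normSq_add_mul_I]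
    linear_combination Real.sin u.re ^ 2 * Real.cosh_sq u.im +
      Real.sinh u.im ^ 2 * Real.sin_sq_add_cos_sq u.re
  have hre : Real.sin u.re ^ 2 ≤ E ^ 2 * u.re ^ 2 :=
    Real.sin_sq_le_sq.trans (le_mul_of_one_le_left (sq_nonneg _) (one_le_pow₀ hE))
  have him : Real.sinh u.im ^ 2 ≤ E ^ 2 * u.im ^ 2 := by
    rw [← sq_abs (Real.sinh _), ← sq_abs u.im, ← mul_pow, mul_comm]
    exact pow_le_pow_left₀ (abs_nonneg _) (abs_sinh_le_abs_mul_exp_abs _) 2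
  rw [← sq_le_sq₀ (norm_nonneg _) (by positivity), hsin, mul_pow, Complex.sq_norm, normSq_apply]
  nlinarith

lemma sincSqrt_zero : sincSqrt 0 = 1 := by
  unfold sincSqrt
  rw [tsum_eq_single 0 fun n hn => by simp [zero_pow hn]]
  simp

lemma sincSqrt_sq {u : ℂ} (hu : u ≠ 0) : sincSqrt (u ^ 2) = Complex.sin u / u := by
  refine (((Complex.hasSum_sin u).div_const u).congr_fun fun n => ?_).tsum_eq
  have hf : ((2 * n + 1).factorial : ℂ) ≠ 0 := Nat.cast_ne_zero.mpr (Nat.factorial_ne_zero _)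
  rw [eq_div_iff hu, ← pow_mul]
  field_simp
  ring

lemma norm_sincSqrt_sq_le (u : ℂ) : ‖sincSqrt (u ^ 2)‖ ≤ exp |u.im| := by
  rcases eq_or_ne u 0 with rfl | hu
  · simp [sincSqrt_zero]
  · rw [sincSqrt_sq hu, norm_div, div_le_iff₀ (norm_pos_iff.mpr hu)]
    exact Complex.norm_sin_le_exp_abs_im_mul_norm u

lemma Complex.abs_im_le_of_im_sq_sq_le {u : ℂ} {K : ℝ} (hK : 0 < K)
    (h : (u ^ 2).im ^ 2 ≤ 4 * K ^ 2 * ((u ^ 2).re + K ^ 2)) : |u.im| ≤ K := by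
  have hre : (u ^ 2).re = u.re ^ 2 - u.im ^ 2 := by simp [sq]
  have him : (u ^ 2).im = 2 * u.re * u.im := by simp [sq]; ring
  rw [hre, him] at h
  -- `h` says `(u.im² - K²)(u.re² + K²) ≤ 0`
  rw [← sq_le_sq₀ (abs_nonneg _) hK.le, sq_abs]
  by_contra! hlt
  nlinarith [mul_pos (sub_pos.mpr hlt) (add_pos_of_nonneg_of_pos (sq_nonneg u.re) (pow_pos hK 2))]

lemma norm_sincSqrt_le {w : ℂ} {K : ℝ} (hK : 0 < K)
    (h : w.im ^ 2 ≤ 4 * K ^ 2 * (w.re + K ^ 2)) : ‖sincSqrt w‖ ≤ exp K := by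
  obtain ⟨u, rfl⟩ := IsAlgClosed.exists_pow_nat_eq w two_pos
  exact (norm_sincSqrt_sq_le u).trans (exp_le_exp.mpr (Complex.abs_im_le_of_im_sq_sq_le hK h))

lemma im_sq_sub_sq_sq_le {c δ κ : ℝ} {ξ : ℂ} (hδ : 0 ≤ δ) (hδc : δ ≤ c) (hκ0 : 0 ≤ κ)
    (hκ : 2 * κ + 1 ≤ κ ^ 2) (hre : c - δ ≤ ξ.re) (him0 : 0 ≤ ξ.im) (him : ξ.im ≤ δ) :
    (ξ ^ 2 - (c : ℂ) ^ 2).im ^ 2 ≤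
      4 * (κ * δ * c) * ((ξ ^ 2 - (c : ℂ) ^ 2).re + κ * δ * c) := by
  have hwre : (ξ ^ 2 - (c : ℂ) ^ 2).re = ξ.re ^ 2 - ξ.im ^ 2 - c ^ 2 := by simp [sq]
  have hwim : (ξ ^ 2 - (c : ℂ) ^ 2).im = 2 * ξ.re * ξ.im := by simp [sq]; ring
  rw [hwre, hwim]
  set x := ξ.re
  set y := ξ.im
  set L := κ * δ * c
  have hκ1 : 1 ≤ κ := by nlinarith
  have hx : (c - δ) ^ 2 ≤ x ^ 2 := pow_le_pow_left₀ (by linarith) hre 2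
  have hy : y ^ 2 ≤ δ ^ 2 := pow_le_pow_left₀ him0 him 2
  have hLy : δ ^ 2 ≤ L := by nlinarith [mul_le_mul hκ1 hδc hδ hκ0]
  have corner : 0 ≤ δ ^ 2 * ((κ ^ 2 - 2 * κ - 1) * c ^ 2 + 2 * c * δ - δ ^ 2) := by
    have : 0 ≤ (κ ^ 2 - 2 * κ - 1) * c ^ 2 := mul_nonneg (by linarith) (sq_nonneg c)
    have : 0 ≤ 2 * c * δ - δ ^ 2 := by nlinarith
    exact mul_nonneg (sq_nonneg δ) (by linarith)
  calc (2 * x * y) ^ 2 = 4 * (x ^ 2 * y ^ 2) := by ring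
    _ ≤ 4 * (x ^ 2 * y ^ 2) + 4 * ((x ^ 2 - (c - δ) ^ 2) * (L - y ^ 2)
          + (L + (c - δ) ^ 2) * (δ ^ 2 - y ^ 2)
          + δ ^ 2 * ((κ ^ 2 - 2 * κ - 1) * c ^ 2 + 2 * c * δ - δ ^ 2)) := by
        have := mul_nonneg (sub_nonneg.mpr hx) (sub_nonneg.mpr (hy.trans hLy))
        have := mul_nonneg (add_nonneg (hLy.trans' (sq_nonneg δ)) (sq_nonneg (c - δ)))
          (sub_nonneg.mpr hy)
        linarith
    _ = 4 * L * (x ^ 2 - y ^ 2 - c ^ 2 + L) := by ring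

theorem loganEll_bound
    (c δ : ℝ) (ξ : ℂ)
    (hc : 0 < c) (hδ0 : 0 < δ) (hδ : δ < c / 100)
    (hre : c - δ ≤ ξ.re) (him0 : 0 ≤ ξ.im) (him : ξ.im ≤ δ) :
    ‖loganEll c ξ‖ ≤ c * Real.exp (1.56 * Real.sqrt (δ * c)) / Real.sinh c := by
  have hsinh : 0 < sinh c := sinh_pos_iff.mpr hc
  have hK : 0 < 1.56 * √(δ * c) := by positivity
  have hK2 : (1.56 * √(δ * c)) ^ 2 = 1.56 ^ 2 * δ * c := by
    rw [mul_pow, sq_sqrt (by positivity)]; ring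
  have hw := im_sq_sub_sq_sq_le (κ := 1.56 ^ 2) hδ0.le (by linarith) (by norm_num) (by norm_num)
    hre him0 him
  rw [← hK2] at hw
  calc ‖loganEll c ξ‖ = c / sinh c * ‖sincSqrt (ξ ^ 2 - (c : ℂ) ^ 2)‖ := by
        rw [loganEll, norm_mul, norm_div, Complex.norm_of_nonneg hc.le,
          Complex.norm_of_nonneg hsinh.le]
    _ ≤ c / sinh c * exp (1.56 * √(δ * c)) := by gcongr; exact norm_sincSqrt_le hK hw
    _ = c * exp (1.56 * √(δ * c)) / sinh c := by ring
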